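/- arXiv:2306.08530 — 5 statements merged into one kernel-verified Lean document; each statement's English description precedes it below -/
import Mathlib

section
/- For every n ≥ 1 and every n×n unitary matrix U all of whose entries lie in ℤ[1/2,i], the determinant of U belongs to {1, i, −1, −i}. -/
noncomputable section
open Matrix Complex

/-- The ring ℤ[1/2, i], the smallest subring of ℂ containing 1/2 and i. -/
def Zhi : Subring ℂ := Subring.closure {1 / 2, I}

/-- Dyadic Gaussian numbers as a subring of ℂ. -/
def DyadicG : Subring ℂ where
  carrier := {z | ∃ (a b : ℤ) (k : ℕ), z = ((a : ℂ) + (b : ℂ) * I) / 2 ^ k}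
  one_mem' := ⟨1, 0, 0, by norm_num⟩
  zero_mem' := ⟨0, 0, 0, by norm_num⟩
  add_mem' := by
    rintro x y ⟨a, b, k, rfl⟩ ⟨c, d, m, rfl⟩
    exact ⟨a * 2 ^ m + c * 2 ^ k, b * 2 ^ m + d * 2 ^ k, k + m, by
      push_cast
      field_simp
      ring⟩
  neg_mem' := by
    rintro x ⟨a, b, k, rfl⟩
    exact ⟨-a, -b, k, by push_cast; ring⟩
  mul_mem' := by
    rintro x y ⟨a, b, k, rfl⟩ ⟨c, d, m, rfl⟩
    refine ⟨a * c - b * d, a * d + b * c, k + m, ?_⟩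
    push_cast
    rw [div_mul_div_comm, ← pow_add]
    congr 1
    linear_combination ((b : ℂ) * d) * Complex.I_sq

lemma Zhi_le_DyadicG : Zhi ≤ DyadicG := by
  apply Subring.closure_le.2
  rintro z (rfl | rfl)
  · exact ⟨1, 0, 1, by norm_num⟩
  · exact ⟨0, 1, 0, by norm_num⟩

lemma odd_sq_mod (a : ℤ) (h : a % 2 = 1) : a ^ 2 % 4 = 1 := by
  obtain ⟨m, rfl⟩ : ∃ m, a = 2 * m + 1 := ⟨a / 2, by omega⟩
  have : (2 * m + 1) ^ 2 = 4 * (m * m + m) + 1 := by ring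
  omega

lemma key (k : ℕ) : ∀ a b : ℤ, a ^ 2 + b ^ 2 = 4 ^ k →
    ∃ a' b' : ℤ, a' ^ 2 + b' ^ 2 = 1 ∧ (a : ℂ) + (b : ℂ) * I = 2 ^ k * ((a' : ℂ) + (b' : ℂ) * I) := by
  induction k with
  | zero => intro a b h; exact ⟨a, b, by simpa using h, by push_cast; ring⟩
  | succ k ih =>
    intro a b h
    have h4 : a ^ 2 + b ^ 2 = 4 * 4 ^ k := by rw [h]; ring
    have ha : a % 2 = 0 := by
      by_contra hc
      have := odd_sq_mod a (by omega)
      have hb := Int.emod_two_eq b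
      rcases hb with hb | hb
      · obtain ⟨m, rfl⟩ : ∃ m, b = 2 * m := ⟨b / 2, by omega⟩
        have : (2 * m) ^ 2 = 4 * (m * m) := by ring
        omega
      · have := odd_sq_mod b hb
        omega
    have hb : b % 2 = 0 := by
      by_contra hc
      have := odd_sq_mod b (by omega)
      obtain ⟨m, rfl⟩ : ∃ m, a = 2 * m := ⟨a / 2, by omega⟩
      have : (2 * m) ^ 2 = 4 * (m * m) := by ring
      omega
    obtain ⟨a₀, rfl⟩ : ∃ m, a = 2 * m := ⟨a / 2, by omega⟩
    obtain ⟨b₀, rfl⟩ : ∃ m, b = 2 * m := ⟨b / 2, by omega⟩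
    have h₀ : a₀ ^ 2 + b₀ ^ 2 = 4 ^ k := by nlinarith
    obtain ⟨a', b', h1, h2⟩ := ih a₀ b₀ h₀
    refine ⟨a', b', h1, ?_⟩
    push_cast
    rw [pow_succ]
    push_cast at h2
    linear_combination 2 * h2

/-- For every `n ≥ 1` and every `n × n` unitary matrix `U` all of whose entries lie in
ℤ[1/2, i], the determinant of `U` belongs to `{1, i, -1, -i}`. -/
theorem det_of_unitary_with_entries_in_Zhi (n : ℕ) (hn : 1 ≤ n)
    (U : Matrix (Fin n) (Fin n) ℂ)
    (hU : U ∈ Matrix.unitaryGroup (Fin n) ℂ)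
    (hent : ∀ a b, U a b ∈ Zhi) :
    U.det ∈ ({1, I, -1, -I} : Set ℂ) := by
  -- det U ∈ Zhi
  set V : Matrix (Fin n) (Fin n) Zhi := fun a b => ⟨U a b, hent a b⟩ with hV
  have hmap : U = V.map Zhi.subtype := by ext a b; rfl
  have hdet : U.det ∈ Zhi := by
    rw [hmap, show V.map ⇑Zhi.subtype = Zhi.subtype.mapMatrix V from rfl,
      ← RingHom.map_det]
    exact (V.det).2
  have hdet' : U.det ∈ DyadicG := Zhi_le_DyadicG hdet
  obtain ⟨a, b, k, hd⟩ := hdet'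
  -- |det U| = 1
  have hu : U.det ∈ unitary ℂ := Matrix.det_of_mem_unitary hU
  have habs : Complex.normSq U.det = 1 := by
    have := hu.1
    have h2 : (starRingEnd ℂ) U.det * U.det = 1 := this
    rw [← Complex.normSq_eq_conj_mul_self] at h2
    exact_mod_cast h2
  have hsum : a ^ 2 + b ^ 2 = 4 ^ k := by
    have h1 : Complex.normSq ((a : ℂ) + (b : ℂ) * I) = (a : ℝ) ^ 2 + (b : ℝ) ^ 2 := by
      rw [show ((a : ℂ) + (b : ℂ) * I) = Complex.mk (a : ℝ) (b : ℝ) by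
        simp [Complex.ext_iff]]
      simp [Complex.normSq_mk]
      ring
    have h2 : Complex.normSq U.det = ((a : ℝ) ^ 2 + (b : ℝ) ^ 2) / 4 ^ k := by
      rw [hd, map_div₀, map_pow, h1]
      norm_num [Complex.normSq_apply]
    rw [habs] at h2
    have h3 : (a : ℝ) ^ 2 + (b : ℝ) ^ 2 = 4 ^ k := by
      field_simp at h2
      linarith
    exact_mod_cast h3
  obtain ⟨a', b', h1, h2⟩ := key k a b hsum
  have hdval : U.det = (a' : ℂ) + (b' : ℂ) * I := by
    rw [hd, h2]
    field_simp
  have ha' : a' ^ 2 ≤ 1 := by nlinarith [sq_nonneg b']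
  have hb' : b' ^ 2 ≤ 1 := by nlinarith [sq_nonneg a']
  have ha1 : -1 ≤ a' := by nlinarith
  have ha2 : a' ≤ 1 := by nlinarith
  have hb1 : -1 ≤ b' := by nlinarith
  have hb2 : b' ≤ 1 := by nlinarith
  clear hmap hV
  interval_cases a' <;> interval_cases b' <;> (try (exfalso; revert h1; decide)) <;>
    simp [hdval]
end
end

section
/- Let c₂ range over {1, CX₁₂}, c₃ over {1, CX₂₁, CX₁₂·CX₂₁}, and c₄ over {X₁^a·X₂^b : a,b ∈ {0,1}}. Then the map (c₄, c₃, c₂) ↦ c₄·c₃·c₂ is injective and its image is exactly the subgroup C of U(8,ℂ) generated by {X₁, CX₁₂, CX₂₁}; in particular C has exactly 24 elements. -/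
noncomputable section
open Matrix Complex

abbrev M8 := Matrix (Fin 8) (Fin 8) ℂ
abbrev U8 := Matrix.unitaryGroup (Fin 8) ℂ

namespace CCS

/-- qubit 0 (most significant bit) of a basis index. -/
def b0 (m : Fin 8) : ℕ := m.val / 4
def b1 (m : Fin 8) : ℕ := m.val / 2 % 2
def b2 (m : Fin 8) : ℕ := m.val % 2

/-- basis index with qubit values `a`, `b`, `c` (mod 2). -/
def idx (a b c : ℕ) : Fin 8 := ⟨4 * (a % 2) + 2 * (b % 2) + c % 2, by omega⟩

/-- the permutation matrix sending `e_s` to `e_{σ s}`. -/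
def permMat (σ : Fin 8 → Fin 8) : M8 := fun r s => if r = σ s then 1 else 0

def q0 (m : Fin 8) : Fin 2 := ⟨b0 m, by simp [b0]; omega⟩
def q1 (m : Fin 8) : Fin 2 := ⟨b1 m, by simp [b1]; omega⟩
def q2 (m : Fin 8) : Fin 2 := ⟨b2 m, by simp [b2]; omega⟩

def Kmat : Matrix (Fin 2) (Fin 2) ℂ := (1 / (1 + I)) • !![1, 1; 1, -1]
def Smat : Matrix (Fin 2) (Fin 2) ℂ := !![1, 0; 0, I]

/-- `A ⊗ I₂ ⊗ I₂` -/
def K0 : M8 := fun r s => Kmat (q0 r) (q0 s) * (if q1 r = q1 s ∧ q2 r = q2 s then 1 else 0)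
def K1 : M8 := fun r s => Kmat (q1 r) (q1 s) * (if q0 r = q0 s ∧ q2 r = q2 s then 1 else 0)
def K2 : M8 := fun r s => Kmat (q2 r) (q2 s) * (if q0 r = q0 s ∧ q1 r = q1 s then 1 else 0)

def omega8 : M8 := Matrix.diagonal fun _ => I
def S0 : M8 := Matrix.diagonal fun m => I ^ b0 m
def S1 : M8 := Matrix.diagonal fun m => I ^ b1 m
def S2 : M8 := Matrix.diagonal fun m => I ^ b2 m
def CS01 : M8 := Matrix.diagonal fun m => I ^ (b0 m * b1 m)
def CS12 : M8 := Matrix.diagonal fun m => I ^ (b1 m * b2 m)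
def CS02 : M8 := Matrix.diagonal fun m => I ^ (b0 m * b2 m)
def CCZ : M8 := Matrix.diagonal fun m => (-1 : ℂ) ^ (b0 m * b1 m * b2 m)

def X0 : M8 := permMat fun m => idx (b0 m + 1) (b1 m) (b2 m)
def X1 : M8 := permMat fun m => idx (b0 m) (b1 m + 1) (b2 m)
def X2 : M8 := permMat fun m => idx (b0 m) (b1 m) (b2 m + 1)
def CX01 : M8 := permMat fun m => idx (b0 m) (b1 m + b0 m) (b2 m)
def CX10 : M8 := permMat fun m => idx (b0 m + b1 m) (b1 m) (b2 m)
def CX12 : M8 := permMat fun m => idx (b0 m) (b1 m) (b2 m + b1 m)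
def CX21 : M8 := permMat fun m => idx (b0 m) (b1 m + b2 m) (b2 m)
def CX02 : M8 := permMat fun m => idx (b0 m) (b1 m) (b2 m + b0 m)
def CX20 : M8 := permMat fun m => idx (b0 m + b2 m) (b1 m) (b2 m)
def CCX0 : M8 := permMat fun m => idx (b0 m + b1 m * b2 m) (b1 m) (b2 m)
def Swap01 : M8 := permMat fun m => idx (b1 m) (b0 m) (b2 m)
def Swap12 : M8 := permMat fun m => idx (b0 m) (b2 m) (b1 m)

/-- The ring ℤ[1/2, i]. -/
def Zhi : Subring ℂ := Subring.closure {1 / 2, I}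

/-- The 3-qubit Clifford+CS group, as a subgroup of U(8,ℂ). -/
def CliffordCS3 : Subgroup U8 :=
  Subgroup.closure {u : U8 | (u : M8) ∈ ({omega8, K0, K1, K2, S0, S1, S2, CS01, CS12} : Set M8)}

end CCS

noncomputable section
open CCS

/-!
The three generators are permutation matrices, so `C` is the image of the subgroup of `S₈`
generated by the underlying permutations `x1, cx12, cx21` under the faithful representation
`σ ↦ permMat σ`. In `S₈` the 24 normal forms are pairwise distinct, and left multiplication by
any of the (involutive) generators maps normal forms to normal forms; as `1` is one of them,
they form the generated subgroup. Both are finite checks. Conceptually, this subgroup is the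
affine group of `𝔽₂²` acting on qubits 1 and 2: the `c₄` are its translations and the `c₃ c₂`
run through `GL₂(𝔽₂) ≅ S₃`.
-/

section TripleProduct

variable {M N F : Type*} [Mul M] [Mul N] [FunLike F M N] [MulHomClass F M N]

def mul₃ (t : M × M × M) : M := t.1 * t.2.1 * t.2.2

theorem mul₃_comp_prodMap (f : F) : mul₃ ∘ Prod.map f (Prod.map f f) = f ∘ mul₃ := by
  funext t
  simp [mul₃, map_mul]

theorem image_mul₃_prod_image (f : F) (A B C : Set M) :
    mul₃ '' ((f '' A) ×ˢ (f '' B) ×ˢ (f '' C)) = f '' (mul₃ '' (A ×ˢ B ×ˢ C)) := by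
  rw [← Set.prodMap_image_prod, ← Set.prodMap_image_prod, Set.image_image, Set.image_image]
  exact congrArg (· '' _) (mul₃_comp_prodMap f)

theorem Set.InjOn.mul₃_prod_image {f : F} (hf : Function.Injective f) {A B C : Set M}
    (h : Set.InjOn mul₃ (A ×ˢ B ×ˢ C)) : Set.InjOn mul₃ ((f '' A) ×ˢ (f '' B) ×ˢ (f '' C)) := by
  rw [← Set.prodMap_image_prod, ← Set.prodMap_image_prod]
  refine Set.InjOn.image_of_comp ?_
  rw [mul₃_comp_prodMap]
  exact hf.comp_injOn h

end TripleProduct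

namespace CCS

open Equiv Set Subgroup

def permMatHom : Perm (Fin 8) →* M8 where
  toFun σ := permMat σ
  map_one' := by
    ext r s
    simp only [permMat, Matrix.one_apply]
    congr
  map_mul' σ τ := by
    ext r s
    simp only [permMat, Perm.coe_mul, Function.comp_apply, Matrix.mul_apply, mul_ite, mul_one,
      mul_zero, Finset.sum_ite_eq', Finset.mem_univ, ↓reduceIte]
    congr

theorem permMatHom_injective : Function.Injective permMatHom := by
  intro σ τ h
  refine Equiv.ext fun s => ?_
  simpa [permMatHom, permMat] using congrFun₂ h (σ s) s

theorem star_permMatHom (σ : Perm (Fin 8)) : star (permMatHom σ) = permMatHom σ⁻¹ := by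
  ext r s
  simp only [permMatHom, MonoidHom.coe_mk, OneHom.coe_mk, permMat, Matrix.star_apply,
    Perm.inv_def, eq_symm_apply, RCLike.star_def]
  split_ifs <;> simp_all [eq_comm]

theorem permMatHom_mem_unitaryGroup (σ : Perm (Fin 8)) :
    permMatHom σ ∈ Matrix.unitaryGroup (Fin 8) ℂ := by
  rw [Matrix.mem_unitaryGroup_iff', star_permMatHom, ← map_mul, inv_mul_cancel, map_one]

def permRep : Perm (Fin 8) →* U8 :=
  permMatHom.codRestrict _ permMatHom_mem_unitaryGroup

theorem coe_permRep (σ : Perm (Fin 8)) : (permRep σ : M8) = permMatHom σ := rfl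

theorem permRep_injective : Function.Injective permRep :=
  (permMatHom.injective_codRestrict _ _).mpr permMatHom_injective

/- The permutations are given by their tables of values on `0, …, 7` rather than by the bit
operations of `X1, …`: the latter use their argument three times, and the kernel, which
substitutes arguments unevaluated, would then pay exponentially in the length of the products
that `decide` evaluates below. -/
def x1 : Perm (Fin 8) :=
  Function.Involutive.toPerm ![2, 3, 0, 1, 6, 7, 4, 5] (by unfold Function.Involutive; decide)
def x2 : Perm (Fin 8) :=
  Function.Involutive.toPerm ![1, 0, 3, 2, 5, 4, 7, 6] (by unfold Function.Involutive; decide)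
def cx12 : Perm (Fin 8) :=
  Function.Involutive.toPerm ![0, 1, 3, 2, 4, 5, 7, 6] (by unfold Function.Involutive; decide)
def cx21 : Perm (Fin 8) :=
  Function.Involutive.toPerm ![0, 3, 2, 1, 4, 7, 6, 5] (by unfold Function.Involutive; decide)

theorem permMatHom_x1 : permMatHom x1 = X1 :=
  congrArg permMat (by decide : (x1 : Fin 8 → Fin 8) = fun m => idx (b0 m) (b1 m + 1) (b2 m))
theorem permMatHom_x2 : permMatHom x2 = X2 :=
  congrArg permMat (by decide : (x2 : Fin 8 → Fin 8) = fun m => idx (b0 m) (b1 m) (b2 m + 1))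
theorem permMatHom_cx12 : permMatHom cx12 = CX12 :=
  congrArg permMat
    (by decide : (cx12 : Fin 8 → Fin 8) = fun m => idx (b0 m) (b1 m) (b2 m + b1 m))
theorem permMatHom_cx21 : permMatHom cx21 = CX21 :=
  congrArg permMat
    (by decide : (cx21 : Fin 8 → Fin 8) = fun m => idx (b0 m) (b1 m + b2 m) (b2 m))

def generators : Set (Perm (Fin 8)) := {x1, cx12, cx21}

theorem inv_eq_self_of_mem_generators {g : Perm (Fin 8)} (hg : g ∈ generators) : g⁻¹ = g := by
  rcases hg with rfl | rfl | rfl <;> exact Function.Involutive.toPerm_symm _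

-- `CX₁₂` conjugates `X₁` to `X₁ X₂`.
theorem x2_eq : x2 = x1 * cx12 * x1 * cx12 := by decide

def c₄ (p : Fin 2 × Fin 2) : Perm (Fin 8) := x1 ^ (p.1 : ℕ) * x2 ^ (p.2 : ℕ)
def c₃ : Fin 3 → Perm (Fin 8) := ![1, cx21, cx12 * cx21]
def c₂ : Fin 2 → Perm (Fin 8) := ![1, cx12]

def normalForm : (Fin 2 × Fin 2) × Fin 3 × Fin 2 → Perm (Fin 8) :=
  mul₃ ∘ Prod.map c₄ (Prod.map c₃ c₂)

theorem normalForm_injective : Function.Injective normalForm := by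
  decide +kernel

theorem exists_normalForm_eq_mul {g : Perm (Fin 8)} (hg : g ∈ generators)
    (i : (Fin 2 × Fin 2) × Fin 3 × Fin 2) : ∃ j, normalForm j = g * normalForm i := by
  rcases hg with rfl | rfl | rfl <;> revert i <;> decide +kernel

theorem normalForm_mem_closure (i : (Fin 2 × Fin 2) × Fin 3 × Fin 2) :
    normalForm i ∈ closure generators := by
  have hx1 : x1 ∈ closure generators := subset_closure (by simp [generators])
  have hcx12 : cx12 ∈ closure generators := subset_closure (by simp [generators])
  have hcx21 : cx21 ∈ closure generators := subset_closure (by simp [generators])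
  have hx2 : x2 ∈ closure generators := by
    rw [x2_eq]
    exact mul_mem (mul_mem (mul_mem hx1 hcx12) hx1) hcx12
  obtain ⟨⟨a, b⟩, j, k⟩ := i
  show x1 ^ (a : ℕ) * x2 ^ (b : ℕ) * c₃ j * c₂ k ∈ _
  refine mul_mem (mul_mem (mul_mem (pow_mem hx1 _) (pow_mem hx2 _)) ?_) ?_
  · fin_cases j <;> simp [c₃, one_mem, hcx21, mul_mem hcx12 hcx21]
  · fin_cases k <;> simp [c₂, one_mem, hcx12]

theorem coe_closure_generators_eq_range :
    (closure generators : Set (Perm (Fin 8))) = range normalForm := by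
  refine subset_antisymm (fun σ hσ ↦ ?_) (range_subset_iff.mpr normalForm_mem_closure)
  induction hσ using closure_induction_left with
  | one => exact ⟨((0, 0), 0, 0), by decide⟩
  | mul_left g hg τ _ ih =>
    obtain ⟨i, rfl⟩ := ih
    exact exists_normalForm_eq_mul hg i
  | inv_mul_cancel g hg τ _ ih =>
    obtain ⟨i, rfl⟩ := ih
    rw [inv_eq_self_of_mem_generators hg]
    exact exists_normalForm_eq_mul hg i

theorem card_closure_generators : Nat.card (closure generators) = 24 := by
  rw [← SetLike.coe_sort_coe, coe_closure_generators_eq_range,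
    Nat.card_range_of_injective normalForm_injective]
  simp

theorem injOn_mul₃_factors : InjOn mul₃ (range c₄ ×ˢ range c₃ ×ˢ range c₂) := by
  rw [← range_prodMap, ← range_prodMap]
  exact normalForm_injective.injOn_range

theorem image_mul₃_factors :
    mul₃ '' (range c₄ ×ˢ range c₃ ×ˢ range c₂) = closure generators := by
  rw [← range_prodMap, ← range_prodMap, ← range_comp, coe_closure_generators_eq_range]
  rfl

theorem image_range_c₄ :
    permMatHom '' range c₄ = {X1 ^ (a : ℕ) * X2 ^ (b : ℕ) | (a : Fin 2) (b : Fin 2)} := by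
  ext A
  simp [← range_comp, c₄, permMatHom_x1, permMatHom_x2, Prod.exists]

theorem image_range_c₃ : permMatHom '' range c₃ = {1, CX21, CX12 * CX21} := by
  rw [c₃, Matrix.range_cons, Matrix.range_cons_cons_empty, singleton_union, image_insert_eq,
    image_pair, map_one, map_mul, permMatHom_cx12, permMatHom_cx21]

theorem image_range_c₂ : permMatHom '' range c₂ = {1, CX12} := by
  rw [c₂, Matrix.range_cons_cons_empty, image_pair, map_one, permMatHom_cx12]

theorem setOf_coe_mem_eq_image_generators :
    {u : U8 | (u : M8) ∈ ({X1, CX12, CX21} : Set M8)} = permRep '' generators := by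
  ext u
  simp [generators, Subtype.ext_iff, coe_permRep, permMatHom_x1, permMatHom_cx12,
    permMatHom_cx21, eq_comm]

end CCS

/-- With `c₂ ∈ {1, CX₁₂}`, `c₃ ∈ {1, CX₂₁, CX₁₂·CX₂₁}`, `c₄ ∈ {X₁^a·X₂^b : a,b ∈ {0,1}}`,
the map `(c₄, c₃, c₂) ↦ c₄·c₃·c₂` is injective and its image is exactly the subgroup `C`
of U(8,ℂ) generated by `{X₁, CX₁₂, CX₂₁}`; in particular `C` has exactly 24 elements. -/
theorem C_normal_form :
    Set.InjOn (fun t : M8 × M8 × M8 => t.1 * t.2.1 * t.2.2)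
      (({X1 ^ (a : ℕ) * X2 ^ (b : ℕ) | (a : Fin 2) (b : Fin 2)} : Set M8) ×ˢ
        (({1, CX21, CX12 * CX21} : Set M8) ×ˢ ({1, CX12} : Set M8))) ∧
    (fun t : M8 × M8 × M8 => t.1 * t.2.1 * t.2.2) ''
        (({X1 ^ (a : ℕ) * X2 ^ (b : ℕ) | (a : Fin 2) (b : Fin 2)} : Set M8) ×ˢ
          (({1, CX21, CX12 * CX21} : Set M8) ×ˢ ({1, CX12} : Set M8))) =
      (fun u : U8 => (u : M8)) ''
        (Subgroup.closure {u : U8 | (u : M8) ∈ ({X1, CX12, CX21} : Set M8)}) ∧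
    Nat.card (Subgroup.closure {u : U8 | (u : M8) ∈ ({X1, CX12, CX21} : Set M8)}) = 24 := by
  rw [← image_range_c₄, ← image_range_c₃, ← image_range_c₂, setOf_coe_mem_eq_image_generators,
    ← MonoidHom.map_closure, Subgroup.card_map_of_injective permRep_injective, Subgroup.coe_map,
    Set.image_image]
  refine ⟨injOn_mul₃_factors.mul₃_prod_image permMatHom_injective, ?_, card_closure_generators⟩
  exact (image_mul₃_prod_image permMatHom _ _ _).trans (congrArg _ image_mul₃_factors)
end
end
end

section
/- Let C be the subgroup of U(8,ℂ) generated by {X₁, CX₁₂, CX₂₁}, Q the subgroup generated by {X₀, CX₁₀, CX₂₀, CCX₀}, and CQ the subgroup generated by the union of these two generating sets. Then Q is a normal subgroup of CQ, and the multiplication map C × Q → CQ, (c,q) ↦ c·q, is a bijection; i.e., CQ is the internal semidirect product C ⋉ Q. -/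
noncomputable section
open Matrix Complex

noncomputable section
open CCS

/-- The subgroup `C = ⟨X₁, CX₁₂, CX₂₁⟩` of U(8,ℂ). -/
def Cgrp : Subgroup U8 :=
  Subgroup.closure {u : U8 | (u : M8) ∈ ({X1, CX12, CX21} : Set M8)}

/-- The subgroup `Q = ⟨X₀, CX₁₀, CX₂₀, CCX₀⟩` of U(8,ℂ). -/
def Qgrp : Subgroup U8 :=
  Subgroup.closure {u : U8 | (u : M8) ∈ ({X0, CX10, CX20, CCX0} : Set M8)}

/-- The subgroup `CQ` generated by the union of the generating sets of `C` and `Q`. -/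
def CQgrp : Subgroup U8 :=
  Subgroup.closure {u : U8 | (u : M8) ∈
    ({X1, CX12, CX21} ∪ {X0, CX10, CX20, CCX0} : Set M8)}

/-! All generators are permutation matrices and the permutation representation of
`Perm (Fin 8)` is faithful, so we may argue with permutations of the basis. There `C` fixes
qubit 0 and `Q` fixes qubits 1 and 2 (the index mod 4), so `C ⊓ Q = ⊥`. An element of `Q` adds a
Boolean function `f` of qubits 1, 2 to qubit 0, and `Q` realises every such `f`; conjugation by
an element `c` of `C` replaces `f` by `f ∘ c⁻¹`, so `C` normalizes `Q`. As `CQ = C ⊔ Q`, this makes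
`CQ` the internal semidirect product. -/

open Equiv

namespace Subgroup

variable {G : Type*} [Group G]

theorem mem_normalizer_closure_of_conj_mem [Finite G] {T : Set G} {g : G}
    (h : ∀ t ∈ T, g * t * g⁻¹ ∈ closure T) : g ∈ normalizer (closure T : Set G) := by
  have hconj : (closure T).map (MulAut.conj g).toMonoidHom ≤ closure T := by
    rw [MonoidHom.map_closure, closure_le]
    rintro _ ⟨t, ht, rfl⟩
    exact h t ht
  exact mem_normalizer_fintype fun n hn => hconj ⟨n, hn, rfl⟩

theorem semidirect_of_le_normalizer_of_disjoint {H N : Subgroup G} (hLE : H ≤ normalizer N)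
    (hdisj : Disjoint H N) :
    N ≤ H ⊔ N ∧ (N.subgroupOf (H ⊔ N)).Normal ∧
      Function.Injective (fun p : H × N => (p.1 : G) * (p.2 : G)) ∧
      Set.range (fun p : H × N => (p.1 : G) * (p.2 : G)) = (H ⊔ N : Subgroup G) := by
  refine ⟨le_sup_right, normal_subgroupOf_sup_of_le_normalizer hLE,
    mul_injective_of_disjoint hdisj, ?_⟩
  rw [coe_mul_of_left_le_normalizer_right H N hLE]
  ext g
  simp [Set.mem_mul]

end Subgroup

namespace Equiv.Perm

variable {α β : Type*}

def preserving (f : α → β) : Subgroup (Perm α) where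
  carrier := {σ | ∀ a, f (σ a) = f a}
  one_mem' _ := rfl
  mul_mem' hσ hτ a := (hσ _).trans (hτ a)
  inv_mem' {σ} hσ a := by simpa using (hσ (σ⁻¹ a)).symm

theorem mem_preserving {f : α → β} {σ : Perm α} : σ ∈ preserving f ↔ ∀ a, f (σ a) = f a :=
  Iff.rfl

end Equiv.Perm

namespace CCS

theorem permMat_eq_permMatrix_inv (σ : Perm (Fin 8)) : permMat σ = σ⁻¹.permMatrix ℂ := by
  ext r s
  simp only [permMat, PEquiv.toMatrix_apply, toPEquiv_apply, Option.mem_def, Option.some.injEq,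
    Perm.inv_def, Equiv.symm_apply_eq]

def permUnitary : Perm (Fin 8) →* U8 :=
  (Matrix.permMatrixHom (n := Fin 8) (R := ℂ)).codRestrict _ fun σ => by
    rw [Matrix.mem_unitaryGroup_iff', Matrix.star_eq_conjTranspose, Matrix.permMatrixHom_apply,
      Matrix.conjTranspose_permMatrix, ← Matrix.permMatrix_mul, mul_inv_cancel,
      Matrix.permMatrix_one]

theorem coe_permUnitary (σ : Perm (Fin 8)) : (permUnitary σ : M8) = permMat σ :=
  (permMat_eq_permMatrix_inv σ).symm

theorem permMat_injective : Function.Injective fun σ : Perm (Fin 8) => permMat σ := fun σ τ h =>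
  Equiv.ext fun s => by simpa [permMat] using congrFun (congrFun h (σ s)) s

theorem permUnitary_injective : Function.Injective permUnitary := fun σ τ h =>
  permMat_injective (by simpa only [coe_permUnitary] using congrArg Subtype.val h)

def permX1 : Perm (Fin 8) := Function.Involutive.toPerm
  (fun m => idx (b0 m) (b1 m + 1) (b2 m)) (by unfold Function.Involutive; decide)
def permCX12 : Perm (Fin 8) := Function.Involutive.toPerm
  (fun m => idx (b0 m) (b1 m) (b2 m + b1 m)) (by unfold Function.Involutive; decide)
def permCX21 : Perm (Fin 8) := Function.Involutive.toPerm
  (fun m => idx (b0 m) (b1 m + b2 m) (b2 m)) (by unfold Function.Involutive; decide)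
def permX0 : Perm (Fin 8) := Function.Involutive.toPerm
  (fun m => idx (b0 m + 1) (b1 m) (b2 m)) (by unfold Function.Involutive; decide)
def permCX10 : Perm (Fin 8) := Function.Involutive.toPerm
  (fun m => idx (b0 m + b1 m) (b1 m) (b2 m)) (by unfold Function.Involutive; decide)
def permCX20 : Perm (Fin 8) := Function.Involutive.toPerm
  (fun m => idx (b0 m + b2 m) (b1 m) (b2 m)) (by unfold Function.Involutive; decide)
def permCCX0 : Perm (Fin 8) := Function.Involutive.toPerm
  (fun m => idx (b0 m + b1 m * b2 m) (b1 m) (b2 m)) (by unfold Function.Involutive; decide)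

def Cperm : Subgroup (Perm (Fin 8)) := Subgroup.closure {permX1, permCX12, permCX21}
def Qperm : Subgroup (Perm (Fin 8)) := Subgroup.closure {permX0, permCX10, permCX20, permCCX0}

theorem Cperm_le_preserving_b0 : Cperm ≤ Perm.preserving b0 := by
  rw [Cperm, Subgroup.closure_le]
  rintro σ (rfl | rfl | rfl) <;> rw [SetLike.mem_coe, Perm.mem_preserving] <;> decide

theorem Qperm_le_preserving_mod_four : Qperm ≤ Perm.preserving fun m : Fin 8 => m.val % 4 := by
  rw [Qperm, Subgroup.closure_le]
  rintro σ (rfl | rfl | rfl | rfl) <;> rw [SetLike.mem_coe, Perm.mem_preserving] <;> decide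

theorem disjoint_Cperm_Qperm : Disjoint Cperm Qperm := by
  rw [Subgroup.disjoint_def]
  intro σ hC hQ
  ext m
  have hdiv := Cperm_le_preserving_b0 hC m
  have hmod := Qperm_le_preserving_mod_four hQ m
  simp only [b0] at hdiv hmod
  simp only [Perm.coe_one, id_eq]
  omega

-- Stated pointwise, so that `decide` only has to evaluate permutations.
theorem conj_Cgen_Qgen {g t : Perm (Fin 8)} (hg : g ∈ ({permX1, permCX12, permCX21} : Set _))
    (ht : t ∈ ({permX0, permCX10, permCX20, permCCX0} : Set _)) :
    ∃ s ∈ [1, permX0, permCX10, permCX20, permCCX0], ∀ m, (g * t * g⁻¹) m = (t * s) m := by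
  rcases hg with rfl | rfl | rfl <;> rcases ht with rfl | rfl | rfl | rfl <;> decide

theorem Cperm_le_normalizer_Qperm : Cperm ≤ Subgroup.normalizer (Qperm : Set (Perm (Fin 8))) := by
  rw [Cperm, Subgroup.closure_le]
  intro g hg
  refine Subgroup.mem_normalizer_closure_of_conj_mem fun t ht => ?_
  obtain ⟨s, hs, hconj⟩ := conj_Cgen_Qgen hg ht
  rw [Equiv.ext hconj]
  refine mul_mem (Subgroup.subset_closure ht) ?_
  simp only [List.mem_cons, List.not_mem_nil, or_false] at hs
  rcases hs with rfl | rfl | rfl | rfl | rfl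
  · exact one_mem _
  all_goals exact Subgroup.subset_closure (by simp)

theorem closure_coe_mem_image_permMat (S : Set (Perm (Fin 8))) :
    Subgroup.closure {u : U8 | (u : M8) ∈ (fun σ : Perm (Fin 8) => permMat σ) '' S} =
      (Subgroup.closure S).map permUnitary := by
  rw [MonoidHom.map_closure]
  congr 1
  ext u
  constructor
  · rintro ⟨σ, hσ, h⟩
    exact ⟨σ, hσ, Subtype.ext ((coe_permUnitary σ).trans h)⟩
  · rintro ⟨σ, hσ, rfl⟩
    exact ⟨σ, hσ, (coe_permUnitary σ).symm⟩

end CCS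

theorem Cgrp_eq_map_Cperm : Cgrp = Cperm.map permUnitary := by
  rw [Cgrp, Cperm, ← closure_coe_mem_image_permMat]
  simp only [Set.image_insert_eq, Set.image_singleton]
  rfl

theorem Qgrp_eq_map_Qperm : Qgrp = Qperm.map permUnitary := by
  rw [Qgrp, Qperm, ← closure_coe_mem_image_permMat]
  simp only [Set.image_insert_eq, Set.image_singleton]
  rfl

theorem Cgrp_le_normalizer_Qgrp : Cgrp ≤ Subgroup.normalizer (Qgrp : Set U8) := by
  rw [Cgrp_eq_map_Cperm, Qgrp_eq_map_Qperm]
  exact (Subgroup.map_mono Cperm_le_normalizer_Qperm).trans (Subgroup.le_normalizer_map _)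

theorem disjoint_Cgrp_Qgrp : Disjoint Cgrp Qgrp := by
  rw [Cgrp_eq_map_Cperm, Qgrp_eq_map_Qperm]
  exact Subgroup.disjoint_map permUnitary_injective disjoint_Cperm_Qperm

theorem CQgrp_eq_sup : CQgrp = Cgrp ⊔ Qgrp :=
  Subgroup.closure_union _ _

/-- `Q` is normal in `CQ` and multiplication `C × Q → CQ` is a bijection, i.e. `CQ` is the
internal semidirect product `C ⋉ Q`. -/
theorem CQ_semidirect :
    Qgrp ≤ CQgrp ∧ (Qgrp.subgroupOf CQgrp).Normal ∧
    Function.Injective (fun p : Cgrp × Qgrp => (p.1 : U8) * (p.2 : U8)) ∧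
    Set.range (fun p : Cgrp × Qgrp => (p.1 : U8) * (p.2 : U8)) = (CQgrp : Set U8) := by
  rw [CQgrp_eq_sup]
  exact Subgroup.semidirect_of_le_normalizer_of_disjoint Cgrp_le_normalizer_Qgrp disjoint_Cgrp_Qgrp
end
end
end

section
/- The subgroup P of U(8,ℂ) generated by {CX₀₁, CX₁₀, CX₁₂, CX₂₁, CCX₀, X₀} is exactly the group of all 8×8 permutation matrices (the image of the symmetric group on 8 elements under the permutation-matrix representation); in particular P has exactly 8! = 40320 elements. -/
noncomputable section
open Matrix Complex

noncomputable section
open CCS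


namespace CCS

/-! ### Auxiliary material -/

lemma permMat_mul (σ τ : Fin 8 → Fin 8) : permMat σ * permMat τ = permMat (σ ∘ τ) := by
  ext r s
  simp only [permMat, Matrix.mul_apply, Function.comp]
  rw [Finset.sum_eq_single (τ s)]
  · simp
  · intro b _ hb; simp [hb]
  · intro hb; exact absurd (Finset.mem_univ _) hb

lemma permMat_id : permMat id = (1 : M8) := by
  ext r s
  simp [permMat, Matrix.one_apply, eq_comm]

lemma permMat_star (σ : Equiv.Perm (Fin 8)) :
    star (permMat ⇑σ) = permMat ⇑σ⁻¹ := by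
  ext r s
  simp only [Matrix.star_apply, permMat]
  by_cases h : s = σ r
  · rw [if_pos h, if_pos (by subst h; simp), star_one]
  · rw [if_neg h, if_neg (fun hr => h (by subst hr; simp)), star_zero]

lemma permMat_mem_unitary (σ : Equiv.Perm (Fin 8)) : permMat ⇑σ ∈ unitary M8 := by
  rw [Unitary.mem_iff]
  have h1 : ⇑σ⁻¹ ∘ ⇑σ = id := by funext x; simp
  have h2 : ⇑σ ∘ ⇑σ⁻¹ = id := by funext x; simp
  constructor
  · rw [permMat_star, permMat_mul, h1, permMat_id]
  · rw [permMat_star, permMat_mul, h2, permMat_id]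

/-- the permutation matrix representation as a group hom into `U8`. -/
def permU : Equiv.Perm (Fin 8) →* U8 where
  toFun σ := ⟨permMat ⇑σ, permMat_mem_unitary σ⟩
  map_one' := by
    apply Subtype.ext
    show permMat ⇑(1 : Equiv.Perm (Fin 8)) = _
    rw [Equiv.Perm.coe_one, permMat_id]
    rfl
  map_mul' σ τ := by
    ext1
    simp only [Matrix.UnitaryGroup.mul_apply]
    rw [permMat_mul]
    rfl

lemma permU_injective : Function.Injective permU := by
  intro σ τ h
  ext s
  have h2 : permMat ⇑σ = permMat ⇑τ := congrArg Subtype.val h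
  have h3 := congrFun (congrFun h2 (σ s)) s
  simp only [permMat, if_true, eq_self_iff_true] at h3
  have h4 : σ s = τ s := by
    by_contra hne
    rw [if_neg hne] at h3
    exact one_ne_zero h3
  exact congrArg Fin.val h4

-- the six generators as permutations
def fX0 : Fin 8 → Fin 8 := fun m => idx (b0 m + 1) (b1 m) (b2 m)
def fCX01 : Fin 8 → Fin 8 := fun m => idx (b0 m) (b1 m + b0 m) (b2 m)
def fCX10 : Fin 8 → Fin 8 := fun m => idx (b0 m + b1 m) (b1 m) (b2 m)
def fCX12 : Fin 8 → Fin 8 := fun m => idx (b0 m) (b1 m) (b2 m + b1 m)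
def fCX21 : Fin 8 → Fin 8 := fun m => idx (b0 m) (b1 m + b2 m) (b2 m)
def fCCX0 : Fin 8 → Fin 8 := fun m => idx (b0 m + b1 m * b2 m) (b1 m) (b2 m)

def pX0 : Equiv.Perm (Fin 8) :=
  Function.Involutive.toPerm fX0 (fun x => by revert x; decide)
def pCX01 : Equiv.Perm (Fin 8) :=
  Function.Involutive.toPerm fCX01 (fun x => by revert x; decide)
def pCX10 : Equiv.Perm (Fin 8) :=
  Function.Involutive.toPerm fCX10 (fun x => by revert x; decide)
def pCX12 : Equiv.Perm (Fin 8) :=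
  Function.Involutive.toPerm fCX12 (fun x => by revert x; decide)
def pCX21 : Equiv.Perm (Fin 8) :=
  Function.Involutive.toPerm fCX21 (fun x => by revert x; decide)
def pCCX0 : Equiv.Perm (Fin 8) :=
  Function.Involutive.toPerm fCCX0 (fun x => by revert x; decide)

def genSet : Set (Equiv.Perm (Fin 8)) := {pCX01, pCX10, pCX12, pCX21, pCCX0, pX0}

def cyc : Equiv.Perm (Fin 8) := pCX01 * pCX12 * pCCX0 * pCX01 * pX0

def cycList : List (Fin 8) := [3, 7, 4, 0, 5, 1, 2, 6]

lemma cyc_eq_formPerm : cyc = cycList.formPerm := by decide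

lemma swap37_eq : pCCX0 = Equiv.swap (3 : Fin 8) 7 := by decide

lemma gen_top : Subgroup.closure genSet = (⊤ : Subgroup (Equiv.Perm (Fin 8))) := by
  have hnd : cycList.Nodup := by decide
  have hc : cyc.IsCycle := by
    rw [cyc_eq_formPerm]; exact List.isCycle_formPerm hnd (by decide)
  have hs : cyc.support = Finset.univ := by
    rw [cyc_eq_formPerm]
    rw [List.support_formPerm_of_nodup cycList hnd (by decide)]
    decide
  have h3 : cyc 3 = 7 := by decide
  have := Equiv.Perm.closure_cycle_adjacent_swap hc hs (3 : Fin 8)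
  rw [h3] at this
  rw [eq_top_iff, ← this, Subgroup.closure_le]
  intro x hx
  rcases hx with h | h
  · subst h
    have h1 : pCX01 ∈ Subgroup.closure genSet :=
      Subgroup.subset_closure (by left; rfl)
    have h2 : pCX12 ∈ Subgroup.closure genSet :=
      Subgroup.subset_closure (by right; right; left; rfl)
    have h5 : pCCX0 ∈ Subgroup.closure genSet :=
      Subgroup.subset_closure (by right; right; right; right; left; rfl)
    have h6 : pX0 ∈ Subgroup.closure genSet :=
      Subgroup.subset_closure (by right; right; right; right; right; rfl)
    exact mul_mem (mul_mem (mul_mem (mul_mem h1 h2) h5) h1) h6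
  · simp only [Set.mem_singleton_iff] at h
    subst h
    rw [← swap37_eq]
    exact Subgroup.subset_closure (by right; right; right; right; left; rfl)

lemma permU_val (σ : Equiv.Perm (Fin 8)) : ((permU σ : U8) : M8) = permMat ⇑σ := rfl

end CCS

/-- The subgroup `P = ⟨CX₀₁, CX₁₀, CX₁₂, CX₂₁, CCX₀, X₀⟩` of U(8,ℂ). -/
def Pgrp : Subgroup U8 :=
  Subgroup.closure {u : U8 | (u : M8) ∈ ({CX01, CX10, CX12, CX21, CCX0, X0} : Set M8)}

/-- `P` is exactly the group of all 8×8 permutation matrices (the image of the symmetric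
group on 8 elements under the permutation-matrix representation); in particular `P` has
exactly `8! = 40320` elements. -/
theorem P_eq_permutation_matrices :
    (Pgrp : Set U8) = {u : U8 | ∃ σ : Equiv.Perm (Fin 8), (u : M8) = permMat σ} ∧
    Nat.card Pgrp = 40320 := by
  have hgen : Pgrp = permU.range := by
    apply le_antisymm
    · rw [Pgrp, Subgroup.closure_le]
      rintro u hu
      simp only [Set.mem_setOf_eq, Set.mem_insert_iff, Set.mem_singleton_iff] at hu
      rcases hu with h | h | h | h | h | h
      · exact ⟨pCX01, Subtype.ext h.symm⟩
      · exact ⟨pCX10, Subtype.ext h.symm⟩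
      · exact ⟨pCX12, Subtype.ext h.symm⟩
      · exact ⟨pCX21, Subtype.ext h.symm⟩
      · exact ⟨pCCX0, Subtype.ext h.symm⟩
      · exact ⟨pX0, Subtype.ext h.symm⟩
    · have : permU.range = Subgroup.map permU (⊤ : Subgroup (Equiv.Perm (Fin 8))) := by
        rw [← MonoidHom.range_eq_map]
      rw [this, ← gen_top, MonoidHom.map_closure, Pgrp, Subgroup.closure_le]
      rintro u ⟨σ, hσ, rfl⟩
      apply Subgroup.subset_closure
      rcases hσ with h | h | h | h | h | h <;> subst h
      · left; rfl
      · right; left; rfl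
      · right; right; left; rfl
      · right; right; right; left; rfl
      · right; right; right; right; left; rfl
      · right; right; right; right; right; rfl
  constructor
  · ext u
    simp only [Set.mem_setOf_eq, SetLike.mem_coe, hgen, MonoidHom.mem_range]
    constructor
    · rintro ⟨σ, rfl⟩; exact ⟨σ, rfl⟩
    · rintro ⟨σ, hσ⟩; exact ⟨σ, Subtype.ext hσ.symm⟩
  · rw [hgen]
    have : Nat.card (Equiv.Perm (Fin 8)) = Nat.card permU.range :=
      Nat.card_congr (MonoidHom.ofInjective permU_injective).toEquiv
    rw [← this, Nat.card_eq_fintype_card, Fintype.card_perm, Fintype.card_fin]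
    rfl
end
end
end

section
/- Let Q be the subgroup of U(8,ℂ) generated by X_Q = {X₀, CX₁₀, CX₂₀, CCX₀}, D the subgroup generated by X_D = {ω, S₀, S₁, S₂, CS₀₁, CS₁₂, CS₀₂, CCZ}, and QD the subgroup generated by X_Q ∪ X_D. Then D is a normal subgroup of QD, and the multiplication map Q × D → QD, (q,d) ↦ q·d, is a bijection; i.e., QD is the internal semidirect product Q ⋉ D. -/
noncomputable section
open Matrix Complex

noncomputable section
open CCS

/-- The subgroup `D = ⟨ω, S₀, S₁, S₂, CS₀₁, CS₁₂, CS₀₂, CCZ⟩` of U(8,ℂ). -/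
def Dgrp : Subgroup U8 :=
  Subgroup.closure {u : U8 | (u : M8) ∈
    ({omega8, S0, S1, S2, CS01, CS12, CS02, CCZ} : Set M8)}

/-- The subgroup `QD` generated by `X_Q ∪ X_D`. -/
def QDgrp : Subgroup U8 :=
  Subgroup.closure {u : U8 | (u : M8) ∈
    ({X0, CX10, CX20, CCX0} ∪
      {omega8, S0, S1, S2, CS01, CS12, CS02, CCZ} : Set M8)}

/-!
Q consists of permutation matrices and D of diagonal ones, so Q ∩ D = 1. The exponent vectors of
the generators of D (as powers of i) are the multilinear monomials 1, x₀, x₁, x₂, x₀x₁, x₁x₂, x₀x₂,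
2x₀x₁x₂ on {0,1}³, and by Möbius inversion these span exactly the lattice of f : {0,1}³ → ℤ with
even sum. So D = {diag(i^f) | ∑ f even}, a description invariant under every permutation of the
coordinates: Q normalizes D, and QD = Q ⊔ D = Q·D is the internal semidirect product.
-/

theorem Equiv.Perm.eq_one_of_permMatrix_eq_diagonal {n R : Type*} [DecidableEq n] [Zero R] [One R]
    [NeZero (1 : R)] {σ : Equiv.Perm n} {d : n → R} (h : σ.permMatrix R = diagonal d) : σ = 1 := by
  refine Equiv.ext fun i => by_contra fun hne => ?_
  rw [Equiv.Perm.one_apply] at hne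
  have := congr_fun₂ h i (σ i)
  simp [PEquiv.toMatrix_apply, diagonal_apply_ne _ (Ne.symm hne)] at this

def evenSumLattice (n : Type*) [Fintype n] : AddSubgroup (n → ℤ) where
  carrier := {f | Even (∑ i, f i)}
  add_mem' {f g} hf hg := by simpa [Finset.sum_add_distrib] using hf.add hg
  zero_mem' := by simp
  neg_mem' {f} hf := by simpa using hf.neg

theorem mem_evenSumLattice {n : Type*} [Fintype n] {f : n → ℤ} :
    f ∈ evenSumLattice n ↔ Even (∑ i, f i) := Iff.rfl

namespace Matrix

variable {n R : Type*} [Fintype n] [DecidableEq n]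

theorem permMatrix_mem_unitaryGroup [CommRing R] [StarRing R] (σ : Equiv.Perm n) :
    σ.permMatrix R ∈ unitaryGroup n R := by
  rw [mem_unitaryGroup_iff', star_eq_conjTranspose, conjTranspose_permMatrix, ← permMatrix_mul,
    mul_inv_cancel, permMatrix_one]

variable (R) in
def permUnitaryHom [CommRing R] [StarRing R] : Equiv.Perm n →* unitaryGroup n R :=
  (permMatrixHom (R := R)).codRestrict (unitaryGroup n R) fun σ => by
    rw [permMatrixHom_apply]; exact permMatrix_mem_unitaryGroup σ⁻¹

theorem coe_permUnitaryHom [CommRing R] [StarRing R] (σ : Equiv.Perm n) :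
    (permUnitaryHom R σ : Matrix n n R) = σ⁻¹.permMatrix R := rfl

theorem coe_permUnitaryHom_conj [CommRing R] [StarRing R] (σ : Equiv.Perm n)
    (u : unitaryGroup n R) :
    ((permUnitaryHom R σ * u * (permUnitaryHom R σ)⁻¹ : unitaryGroup n R) : Matrix n n R) =
      (u : Matrix n n R).submatrix ⇑σ⁻¹ ⇑σ⁻¹ := by
  rw [← map_inv, Submonoid.coe_mul, Submonoid.coe_mul, coe_permUnitaryHom, coe_permUnitaryHom,
    PEquiv.toMatrix_toPEquiv_mul, PEquiv.mul_toMatrix_toPEquiv, inv_inv]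
  rfl

def diagonalIPow : Multiplicative (n → ℤ) →* unitaryGroup n ℂ where
  toFun f := ⟨diagonal fun i => I ^ f.toAdd i, by
    rw [mem_unitaryGroup_iff, star_eq_conjTranspose, diagonal_conjTranspose, diagonal_mul_diagonal]
    convert diagonal_one with i
    simp [← mul_zpow]⟩
  map_one' := Subtype.ext (by simp)
  map_mul' f g := Subtype.ext (by simp [diagonal_mul_diagonal, zpow_add₀ I_ne_zero])

theorem coe_diagonalIPow (f : n → ℤ) :
    (diagonalIPow (.ofAdd f) : Matrix n n ℂ) = diagonal fun i => I ^ f i := rfl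

variable (n) in
def evenIPowDiagonals : Subgroup (unitaryGroup n ℂ) :=
  (evenSumLattice n).toSubgroup.map diagonalIPow

theorem range_permUnitaryHom_le_normalizer :
    (permUnitaryHom ℂ).range ≤
      Subgroup.normalizer (evenIPowDiagonals n : Set (unitaryGroup n ℂ)) := by
  rw [Subgroup.le_normalizer_iff]
  rintro _ ⟨σ, rfl⟩ _ ⟨f, hf, rfl⟩
  refine ⟨.ofAdd (f.toAdd ∘ ⇑σ⁻¹), ?_, Subtype.ext ?_⟩
  · simpa [mem_evenSumLattice, Function.comp_def, Equiv.sum_comp] using hf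
  · rw [coe_permUnitaryHom_conj]
    exact (submatrix_diagonal_equiv (fun i => I ^ f.toAdd i) σ⁻¹).symm

theorem disjoint_range_permUnitaryHom_evenIPowDiagonals :
    Disjoint (permUnitaryHom ℂ).range (evenIPowDiagonals n) := by
  rw [Subgroup.disjoint_def]
  rintro _ ⟨σ, rfl⟩ ⟨f, -, hf⟩
  have : σ⁻¹ = 1 := Equiv.Perm.eq_one_of_permMatrix_eq_diagonal (congr_arg Subtype.val hf).symm
  rw [inv_eq_one.mp this, map_one]

end Matrix

namespace CCS

theorem permMat_eq_permMatrix (σ : Equiv.Perm (Fin 8)) : permMat σ = σ⁻¹.permMatrix ℂ := by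
  ext r s
  simp [permMat, PEquiv.toMatrix_apply, Equiv.Perm.inv_def, Equiv.eq_symm_apply, eq_comm]

theorem mem_range_permUnitaryHom {u : U8} {f : Fin 8 → Fin 8} (hf : f.Injective)
    (hu : (u : M8) = permMat f) : u ∈ (permUnitaryHom ℂ).range :=
  ⟨.ofBijective f (Finite.injective_iff_bijective.mp hf), Subtype.ext <| by
    rw [coe_permUnitaryHom, hu, ← permMat_eq_permMatrix]; rfl⟩

theorem Qgrp_le_range_permUnitaryHom : Qgrp ≤ (permUnitaryHom ℂ).range := by
  rw [Qgrp, Subgroup.closure_le]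
  rintro u (hu | hu | hu | hu) <;> exact mem_range_permUnitaryHom (by decide) hu

/-- The exponents of `ω, S₀, S₁, S₂, CS₀₁, CS₁₂, CS₀₂, CCZ` as powers of `i` (with `-1 = i²`). -/
def Dexponents : Set (Fin 8 → ℤ) :=
  {1, fun m => (b0 m : ℤ), fun m => (b1 m : ℤ), fun m => (b2 m : ℤ),
    fun m => ((b0 m * b1 m : ℕ) : ℤ), fun m => ((b1 m * b2 m : ℕ) : ℤ), fun m => ((b0 m * b2 m : ℕ) : ℤ),
    fun m => 2 * ((b0 m * b1 m * b2 m : ℕ) : ℤ)}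

theorem Dgens_eq_image_diagonalIPow :
    ({omega8, S0, S1, S2, CS01, CS12, CS02, CCZ} : Set M8) =
      (fun f => (diagonalIPow (.ofAdd f) : M8)) '' Dexponents := by
  simp only [Dexponents, Set.image_insert_eq, Set.image_singleton, coe_diagonalIPow, Pi.one_apply,
    _root_.zpow_mul, zpow_ofNat, I_sq, zpow_natCast, pow_one]
  rfl

theorem closure_Dexponents : AddSubgroup.closure Dexponents = evenSumLattice (Fin 8) := by
  apply le_antisymm
  · rw [AddSubgroup.closure_le]
    rintro f (rfl | rfl | rfl | rfl | rfl | rfl | rfl | rfl) <;>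
      exact mem_evenSumLattice.mpr (by decide)
  · intro f hf
    obtain ⟨k, hk⟩ := mem_evenSumLattice.mp hf
    rw [Fin.sum_univ_eight] at hk
    -- Möbius inversion on {0,1}³; the top coefficient `∑ f - 2 (f 0 + f 3 + f 5 + f 6)` is even.
    have hdecomp : f = f 0 • 1 + (f 4 - f 0) • (fun m => (b0 m : ℤ))
        + (f 2 - f 0) • (fun m => (b1 m : ℤ)) + (f 1 - f 0) • (fun m => (b2 m : ℤ))
        + (f 6 - f 4 - f 2 + f 0) • (fun m => ((b0 m * b1 m : ℕ) : ℤ))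
        + (f 3 - f 2 - f 1 + f 0) • (fun m => ((b1 m * b2 m : ℕ) : ℤ))
        + (f 5 - f 4 - f 1 + f 0) • (fun m => ((b0 m * b2 m : ℕ) : ℤ))
        + (k - f 0 - f 3 - f 5 - f 6) • (fun m => 2 * ((b0 m * b1 m * b2 m : ℕ) : ℤ)) := by
      funext m
      fin_cases m <;> simp [b0, b1, b2] <;> linarith
    have hgen : ∀ g ∈ Dexponents, ∀ c : ℤ, c • g ∈ AddSubgroup.closure Dexponents :=
      fun g hg c => zsmul_mem (AddSubgroup.subset_closure hg) c
    rw [hdecomp]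
    refine add_mem (add_mem (add_mem (add_mem (add_mem (add_mem (add_mem ?_ ?_) ?_) ?_) ?_) ?_) ?_)
      ?_ <;> exact hgen _ (by simp [Dexponents]) _

theorem Dgrp_eq_evenIPowDiagonals : Dgrp = evenIPowDiagonals (Fin 8) := by
  rw [Dgrp, Dgens_eq_image_diagonalIPow, evenIPowDiagonals, ← closure_Dexponents,
    AddSubgroup.toSubgroup_closure, MonoidHom.map_closure]
  congr 1
  ext u
  exact ⟨fun ⟨f, hf, h⟩ => ⟨.ofAdd f, hf, Subtype.ext h⟩,
    fun ⟨f, hf, h⟩ => ⟨f.toAdd, hf, congr_arg Subtype.val h⟩⟩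

theorem QDgrp_eq_sup : QDgrp = Qgrp ⊔ Dgrp := by
  rw [QDgrp, Qgrp, Dgrp, ← Subgroup.closure_union]
  rfl

end CCS

/-- `D` is normal in `QD` and multiplication `Q × D → QD` is a bijection, i.e. `QD` is the
internal semidirect product `Q ⋉ D`. -/
theorem QD_semidirect :
    Dgrp ≤ QDgrp ∧ (Dgrp.subgroupOf QDgrp).Normal ∧
    Function.Injective (fun p : Qgrp × Dgrp => (p.1 : U8) * (p.2 : U8)) ∧
    Set.range (fun p : Qgrp × Dgrp => (p.1 : U8) * (p.2 : U8)) = (QDgrp : Set U8) := by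
  have hnorm : Qgrp ≤ Subgroup.normalizer (Dgrp : Set U8) :=
    Qgrp_le_range_permUnitaryHom.trans
      (Dgrp_eq_evenIPowDiagonals ▸ range_permUnitaryHom_le_normalizer)
  have hdisj : Disjoint Qgrp Dgrp :=
    Dgrp_eq_evenIPowDiagonals ▸
      disjoint_range_permUnitaryHom_evenIPowDiagonals.mono_left Qgrp_le_range_permUnitaryHom
  rw [QDgrp_eq_sup]
  refine ⟨le_sup_right, Subgroup.normal_subgroupOf_sup_of_le_normalizer hnorm,
    Subgroup.mul_injective_of_disjoint hdisj, ?_⟩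
  rw [Subgroup.coe_mul_of_left_le_normalizer_right _ _ hnorm]
  ext u
  simp [Set.mem_mul]
end
end
end
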